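/- arXiv:2302.04743 — 8 statements merged into one kernel-verified Lean document; each statement's English description precedes it below -/
import Mathlib

section
/- Let θ0 be a real number, let D ⊆ ℝ with θ0 ∉ D, and let α, β : ℝ → ℝ be functions such that α(θ) ≠ α(θ0) for all θ ∈ D and such that the map θ ↦ (β(θ) − β(θ0))/(α(θ) − α(θ0)) is strictly monotone increasing on D. Let g₁, …, g_T be real numbers and for 0 ≤ τ < T set γ̄_{τ:T} = (1/(T−τ)) · Σ_{t=τ+1}^{T} g_t, and for 0 ≤ τ_i < τ_j set γ̄_{τ_i:τ_j} = (1/(τ_j−τ_i)) · Σ_{t=τ_i+1}^{τ_j} g_t. Suppose 0 ≤ τ_i < τ_j < T and θ₁^{τ_i}, θ₁^{τ_j} ∈ D satisfy the root equations [α(θ₁^{τ}) − α(θ0)] · Σ_{t=τ+1}^{T} g_t − [β(θ₁^{τ}) − β(θ0)] · (T − τ) = 0 for τ = τ_i and τ = τ_j respectively. Then the sign of γ̄_{τ_i:τ_j} − γ̄_{τ_j:T} equals the sign of θ₁^{τ_i} − θ₁^{τ_j}; in particular θ₁^{τ_i} > θ₁^{τ_j} if and only if γ̄_{τ_i:τ_j}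 > γ̄_{τ_j:T}, θ₁^{τ_i} = θ₁^{τ_j} if and only if γ̄_{τ_i:τ_j} = γ̄_{τ_j:T}, and θ₁^{τ_i} < θ₁^{τ_j} if and only if γ̄_{τ_i:τ_j} < γ̄_{τ_j:T}. -/
/-!
A root `θ` of the likelihood-ratio curve started at `τ` is exactly a point where
`(β θ - β θ0) / (α θ - α θ0)` equals the post-change average `γ̄_{τ:T}`. Since this ratio is
strictly increasing, roots are ordered like the averages `γ̄_{τi:T}` and `γ̄_{τj:T}`. Finally
`γ̄_{τi:T}` is the mediant of `γ̄_{τi:τj}` and `γ̄_{τj:T}`, so it lies on the same side of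
`γ̄_{τj:T}` as `γ̄_{τi:τj}`.
-/

section LinearOrderedField

variable {K : Type*} [Field K] [LinearOrder K] [IsStrictOrderedRing K]

theorem cmp_div_div_eq_cmp_mul_mul {a b c d : K} (hb : 0 < b) (hd : 0 < d) :
    cmp (a / b) (c / d) = cmp (a * d) (c * b) := by
  rw [← cmp_mul_pos_right (mul_pos hb hd)]
  congr 1 <;> field_simp

theorem cmp_add_div_add_div_right (x y : K) {a b : K} (ha : 0 < a) (hb : 0 < b) :
    cmp ((x + y) / (a + b)) (y / b) = cmp (x / a) (y / b) := by
  rw [cmp_div_div_eq_cmp_mul_mul (add_pos ha hb) hb, cmp_div_div_eq_cmp_mul_mul ha hb,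
    add_mul, mul_add, cmp_add_right]

theorem div_eq_div_of_mul_sub_mul_eq_zero {a b s n : K} (ha : a ≠ 0) (hn : n ≠ 0)
    (h : a * s - b * n = 0) : b / a = s / n := by
  rw [div_eq_div_iff ha hn]
  linear_combination -h

end LinearOrderedField

open Finset

theorem focus_prop1_sign_of_roots_general
    (θ0 : ℝ) (D : Set ℝ)
    (α β : ℝ → ℝ)
    (hα : ∀ θ ∈ D, α θ ≠ α θ0)
    (hmono : StrictMonoOn (fun θ => (β θ - β θ0) / (α θ - α θ0)) D)
    (T : ℕ) (g : ℕ → ℝ)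
    (τi τj : ℕ) (hij : τi < τj) (hjT : τj < T)
    (θi θj : ℝ) (hθi : θi ∈ D) (hθj : θj ∈ D)
    (hrooti : (α θi - α θ0) * (∑ t ∈ Finset.Ioc τi T, g t)
        - (β θi - β θ0) * ((T : ℝ) - τi) = 0)
    (hrootj : (α θj - α θ0) * (∑ t ∈ Finset.Ioc τj T, g t)
        - (β θj - β θ0) * ((T : ℝ) - τj) = 0) :
    ((∑ t ∈ Finset.Ioc τi τj, g t) / ((τj : ℝ) - τi)
        > (∑ t ∈ Finset.Ioc τj T, g t) / ((T : ℝ) - τj) ↔ θi > θj) ∧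
    ((∑ t ∈ Finset.Ioc τi τj, g t) / ((τj : ℝ) - τi)
        = (∑ t ∈ Finset.Ioc τj T, g t) / ((T : ℝ) - τj) ↔ θi = θj) ∧
    ((∑ t ∈ Finset.Ioc τi τj, g t) / ((τj : ℝ) - τi)
        < (∑ t ∈ Finset.Ioc τj T, g t) / ((T : ℝ) - τj) ↔ θi < θj) := by
  have hlenij : (0 : ℝ) < (τj : ℝ) - τi := sub_pos.mpr (Nat.cast_lt.mpr hij)
  have hlenjT : (0 : ℝ) < (T : ℝ) - τj := sub_pos.mpr (Nat.cast_lt.mpr hjT)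
  rw [← sum_Ioc_consecutive g hij.le hjT.le,
    show (T : ℝ) - τi = ((τj : ℝ) - τi) + ((T : ℝ) - τj) by ring] at hrooti
  have hratioi := div_eq_div_of_mul_sub_mul_eq_zero (sub_ne_zero.mpr (hα θi hθi))
    (add_pos hlenij hlenjT).ne' hrooti
  have hratioj := div_eq_div_of_mul_sub_mul_eq_zero (sub_ne_zero.mpr (hα θj hθj))
    hlenjT.ne' hrootj
  have key : cmp ((∑ t ∈ Ioc τi τj, g t) / ((τj : ℝ) - τi))
      ((∑ t ∈ Ioc τj T, g t) / ((T : ℝ) - τj)) = cmp θi θj := by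
    rw [← cmp_add_div_add_div_right _ _ hlenij hlenjT, ← hratioi, ← hratioj,
      hmono.cmp_map_eq hθi hθj]
  refine ⟨?_, ?_, ?_⟩
  · rw [gt_iff_lt, gt_iff_lt, ← cmp_eq_gt_iff, key, cmp_eq_gt_iff]
  · rw [← cmp_eq_eq_iff, key, cmp_eq_eq_iff]
  · rw [← cmp_eq_lt_iff, key, cmp_eq_lt_iff]

theorem focus_prop1_sign_of_roots
    (θ0 : ℝ) (D : Set ℝ) (hθ0 : θ0 ∉ D)
    (α β : ℝ → ℝ)
    (hα : ∀ θ ∈ D, α θ ≠ α θ0)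
    (hmono : StrictMonoOn (fun θ => (β θ - β θ0) / (α θ - α θ0)) D)
    (T : ℕ) (g : ℕ → ℝ)
    (τi τj : ℕ) (hij : τi < τj) (hjT : τj < T)
    (θi θj : ℝ) (hθi : θi ∈ D) (hθj : θj ∈ D)
    (hrooti : (α θi - α θ0) * (∑ t ∈ Finset.Ioc τi T, g t)
        - (β θi - β θ0) * ((T : ℝ) - τi) = 0)
    (hrootj : (α θj - α θ0) * (∑ t ∈ Finset.Ioc τj T, g t)
        - (β θj - β θ0) * ((T : ℝ) - τj) = 0) :
    ((∑ t ∈ Finset.Ioc τi τj, g t) / ((τj : ℝ) - τi)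
        > (∑ t ∈ Finset.Ioc τj T, g t) / ((T : ℝ) - τj) ↔ θi > θj) ∧
    ((∑ t ∈ Finset.Ioc τi τj, g t) / ((τj : ℝ) - τi)
        = (∑ t ∈ Finset.Ioc τj T, g t) / ((T : ℝ) - τj) ↔ θi = θj) ∧
    ((∑ t ∈ Finset.Ioc τi τj, g t) / ((τj : ℝ) - τi)
        < (∑ t ∈ Finset.Ioc τj T, g t) / ((T : ℝ) - τj) ↔ θi < θj) :=
  focus_prop1_sign_of_roots_general θ0 D α β hα hmono T g τi τj hij hjT θi θj hθi hθj hrooti hrootj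
end

section
/- Let Θ be a nonempty type, H0 ⊆ Θ and Θ1 ⊆ Θ nonempty subsets, and L : ℕ → Θ → ℝ a function (L t θ is the log-likelihood of observation t under parameter θ). For natural numbers i < j define m_{i,j} = sup_{θ0 ∈ H0, θ1 ∈ Θ1} [Σ_{t=1}^{i} L t θ0 + Σ_{t=i+1}^{j} L t θ1] − sup_{θ0 ∈ H0} Σ_{t=1}^{j} L t θ0, and assume every supremum appearing is finite (attained or bounded above). Suppose additionally that H0 ⊆ Θ1. Then for any 0 ≤ τ₁ < τ₂ < … < τ_n < T, the maximum over i = 1, …, n of m_{τ_i, T} satisfies max_{i=1,…,n} m_{τ_i, T} ≤ Σ_{i=1}^{n−1} m_{τ_i, τ_{i+1}} + m_{τ_n, T}. -/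
open Finset

/-- The likelihood-ratio statistic for a single change at time `i` using data up to time `j`:
the maximized two-segment log-likelihood (pre-change parameter in `H0`, post-change
parameter in `Θ1`) minus the maximized no-change log-likelihood. -/
noncomputable def changeLRStat {Θ : Type*} (H0 Θ1 : Set Θ) (L : ℕ → Θ → ℝ) (i j : ℕ) : ℝ :=
  sSup {v : ℝ | ∃ θ0 ∈ H0, ∃ θ1 ∈ Θ1,
      v = (∑ t ∈ Finset.Icc 1 i, L t θ0) + ∑ t ∈ Finset.Ioc i j, L t θ1}
    - sSup {v : ℝ | ∃ θ0 ∈ H0, v = ∑ t ∈ Finset.Icc 1 j, L t θ0}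

/-!
`m` is nonnegative: taking the post-change parameter equal to the pre-change one (allowed as
`H0 ⊆ Θ1`) recovers every no-change likelihood. It also satisfies the triangle inequality
`m i k ≤ m i j + m j k` for `i ≤ j ≤ k`: cut a two-segment fit with change at `i` on `[1, k]` at
`j`; the part on `[1, j]` is a two-segment fit with change at `i`, and the part on `(j, k]`
appended to any no-change fit on `[1, j]` is a two-segment fit with change at `j`.
Telescoping along `τ i ≤ … ≤ τ n ≤ T` and adding the nonnegative terms before `i` bounds each
`m (τ i) T`.
-/

section ChangeLRStat

variable {Θ : Type*} (H0 Θ1 : Set Θ) (L : ℕ → Θ → ℝ)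

def changeLogLiks (i j : ℕ) : Set ℝ :=
  {v : ℝ | ∃ θ0 ∈ H0, ∃ θ1 ∈ Θ1,
    v = (∑ t ∈ Finset.Icc 1 i, L t θ0) + ∑ t ∈ Finset.Ioc i j, L t θ1}

def nullLogLiks (j : ℕ) : Set ℝ :=
  {v : ℝ | ∃ θ0 ∈ H0, v = ∑ t ∈ Finset.Icc 1 j, L t θ0}

theorem changeLRStat_eq (i j : ℕ) :
    changeLRStat H0 Θ1 L i j = sSup (changeLogLiks H0 Θ1 L i j) - sSup (nullLogLiks H0 L j) :=
  rfl

variable {H0 Θ1 L}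

theorem sum_Icc_one_add_sum_Ioc {M : Type*} [AddCommMonoid M] (f : ℕ → M) {i j : ℕ}
    (hij : i ≤ j) : (∑ t ∈ Icc 1 i, f t) + ∑ t ∈ Ioc i j, f t = ∑ t ∈ Icc 1 j, f t := by
  rw [← zero_add 1, Icc_add_one_left_eq_Ioc, Icc_add_one_left_eq_Ioc]
  exact sum_Ioc_consecutive f (Nat.zero_le i) hij

theorem le_sSup_changeLogLiks {i j : ℕ} (hbdd : BddAbove (changeLogLiks H0 Θ1 L i j))
    {θ0 θ1 : Θ} (hθ0 : θ0 ∈ H0) (hθ1 : θ1 ∈ Θ1) :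
    (∑ t ∈ Icc 1 i, L t θ0) + ∑ t ∈ Ioc i j, L t θ1 ≤ sSup (changeLogLiks H0 Θ1 L i j) :=
  le_csSup hbdd ⟨θ0, hθ0, θ1, hθ1, rfl⟩

theorem changeLRStat_nonneg (hH0 : H0.Nonempty) (hsub : H0 ⊆ Θ1) {i j : ℕ}
    (hbdd : BddAbove (changeLogLiks H0 Θ1 L i j)) (hij : i ≤ j) :
    0 ≤ changeLRStat H0 Θ1 L i j := by
  obtain ⟨θ, hθ⟩ := hH0
  rw [changeLRStat_eq, sub_nonneg]
  refine csSup_le ⟨_, θ, hθ, rfl⟩ ?_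
  rintro _ ⟨θ0, hθ0, rfl⟩
  rw [← sum_Icc_one_add_sum_Ioc (L · θ0) hij]
  exact le_sSup_changeLogLiks hbdd hθ0 (hsub hθ0)

theorem sSup_nullLogLiks_add_sum_le (hH0 : H0.Nonempty) {j k : ℕ}
    (hbdd : BddAbove (changeLogLiks H0 Θ1 L j k)) {θ1 : Θ} (hθ1 : θ1 ∈ Θ1) :
    sSup (nullLogLiks H0 L j) + ∑ t ∈ Ioc j k, L t θ1 ≤ sSup (changeLogLiks H0 Θ1 L j k) := by
  obtain ⟨θ, hθ⟩ := hH0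
  rw [← le_sub_iff_add_le]
  refine csSup_le ⟨_, θ, hθ, rfl⟩ ?_
  rintro _ ⟨θ0, hθ0, rfl⟩
  exact le_sub_iff_add_le.mpr (le_sSup_changeLogLiks hbdd hθ0 hθ1)

theorem changeLRStat_le_add (hH0 : H0.Nonempty) (hΘ1 : Θ1.Nonempty) {i j k : ℕ}
    (hbdd_ij : BddAbove (changeLogLiks H0 Θ1 L i j))
    (hbdd_jk : BddAbove (changeLogLiks H0 Θ1 L j k)) (hij : i ≤ j) (hjk : j ≤ k) :
    changeLRStat H0 Θ1 L i k ≤ changeLRStat H0 Θ1 L i j + changeLRStat H0 Θ1 L j k := by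
  obtain ⟨θ, hθ⟩ := hH0
  obtain ⟨θ', hθ'⟩ := hΘ1
  simp only [changeLRStat_eq]
  suffices sSup (changeLogLiks H0 Θ1 L i k) ≤ sSup (changeLogLiks H0 Θ1 L i j)
      + sSup (changeLogLiks H0 Θ1 L j k) - sSup (nullLogLiks H0 L j) by linarith
  refine csSup_le ⟨_, θ, hθ, θ', hθ', rfl⟩ ?_
  rintro _ ⟨θ0, hθ0, θ1, hθ1, rfl⟩
  have hfirst := le_sSup_changeLogLiks hbdd_ij hθ0 hθ1
  have hsecond := sSup_nullLogLiks_add_sum_le ⟨θ, hθ⟩ hbdd_jk hθ1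
  rw [← sum_Ioc_consecutive _ hij hjk]
  linarith

theorem changeLRStat_le_sum_Ico_add (hH0 : H0.Nonempty) (hΘ1 : Θ1.Nonempty)
    (hbdd : ∀ i j, BddAbove (changeLogLiks H0 Θ1 L i j)) {σ : ℕ → ℕ} {i n T : ℕ} (hin : i ≤ n)
    (hσ : MonotoneOn σ (Set.Icc i n)) (hT : σ n ≤ T) :
    changeLRStat H0 Θ1 L (σ i) T
      ≤ (∑ a ∈ Ico i n, changeLRStat H0 Θ1 L (σ a) (σ (a + 1))) + changeLRStat H0 Θ1 L (σ n) T := by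
  induction n, hin using Nat.le_induction with
  | base => simp
  | succ n hin ih =>
    have hstep : σ n ≤ σ (n + 1) :=
      hσ ⟨hin, n.le_succ⟩ ⟨hin.trans n.le_succ, le_rfl⟩ n.le_succ
    have hlast := changeLRStat_le_add hH0 hΘ1 (hbdd _ _) (hbdd _ _) hstep hT
    have hprev := ih (hσ.mono (Set.Icc_subset_Icc le_rfl n.le_succ)) (hstep.trans hT)
    rw [sum_Ico_succ_top hin]
    linarith

end ChangeLRStat

theorem focus_prop2_maxima_bound_general
    {Θ : Type*} (H0 Θ1 : Set Θ)
    (hH0 : H0.Nonempty) (hΘ1 : Θ1.Nonempty) (hsub : H0 ⊆ Θ1)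
    (L : ℕ → Θ → ℝ)
    (hbdd2 : ∀ i j : ℕ, BddAbove {v : ℝ | ∃ θ0 ∈ H0, ∃ θ1 ∈ Θ1,
        v = (∑ t ∈ Finset.Icc 1 i, L t θ0) + ∑ t ∈ Finset.Ioc i j, L t θ1})
    (n T : ℕ) (hn : 1 ≤ n) (τ : ℕ → ℕ)
    (hτmono : ∀ i, 1 ≤ i → i < n → τ i < τ (i + 1))
    (hτT : τ n < T) :
    (Finset.Icc 1 n).sup' (Finset.nonempty_Icc.mpr hn)
        (fun i => changeLRStat H0 Θ1 L (τ i) T)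
      ≤ (∑ i ∈ Finset.Ico 1 n, changeLRStat H0 Θ1 L (τ i) (τ (i + 1)))
        + changeLRStat H0 Θ1 L (τ n) T := by
  have hτ : MonotoneOn τ (Set.Icc 1 n) := monotoneOn_of_le_succ Set.ordConnected_Icc
    fun a _ ha ha' => (hτmono a ha.1 (Order.succ_le_iff.mp ha'.2)).le
  refine sup'_le _ _ fun i hi => ?_
  obtain ⟨hi1, hin⟩ := mem_Icc.mp hi
  have htelescope := changeLRStat_le_sum_Ico_add hH0 hΘ1 hbdd2 hin
    (hτ.mono (Set.Icc_subset_Icc hi1 le_rfl)) hτT.le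
  have hpad : ∑ a ∈ Ico i n, changeLRStat H0 Θ1 L (τ a) (τ (a + 1))
      ≤ ∑ a ∈ Ico 1 n, changeLRStat H0 Θ1 L (τ a) (τ (a + 1)) :=
    sum_le_sum_of_subset_of_nonneg (Ico_subset_Ico hi1 le_rfl) fun a ha _ =>
      changeLRStat_nonneg hH0 hsub (hbdd2 _ _) (hτmono a (mem_Ico.mp ha).1 (mem_Ico.mp ha).2).le
  linarith

theorem focus_prop2_maxima_bound
    {Θ : Type*} [Nonempty Θ] (H0 Θ1 : Set Θ)
    (hH0 : H0.Nonempty) (hΘ1 : Θ1.Nonempty) (hsub : H0 ⊆ Θ1)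
    (L : ℕ → Θ → ℝ)
    (hbdd2 : ∀ i j : ℕ, BddAbove {v : ℝ | ∃ θ0 ∈ H0, ∃ θ1 ∈ Θ1,
        v = (∑ t ∈ Finset.Icc 1 i, L t θ0) + ∑ t ∈ Finset.Ioc i j, L t θ1})
    (hbdd1 : ∀ j : ℕ, BddAbove {v : ℝ | ∃ θ0 ∈ H0, v = ∑ t ∈ Finset.Icc 1 j, L t θ0})
    (n T : ℕ) (hn : 1 ≤ n) (τ : ℕ → ℕ)
    (hτmono : ∀ i, 1 ≤ i → i < n → τ i < τ (i + 1))
    (hτT : τ n < T) :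
    (Finset.Icc 1 n).sup' (Finset.nonempty_Icc.mpr hn)
        (fun i => changeLRStat H0 Θ1 L (τ i) T)
      ≤ (∑ i ∈ Finset.Ico 1 n, changeLRStat H0 Θ1 L (τ i) (τ (i + 1)))
        + changeLRStat H0 Θ1 L (τ n) T :=
  focus_prop2_maxima_bound_general H0 Θ1 hH0 hΘ1 hsub L hbdd2 n T hn τ hτmono hτT
end

section
/- Let α, β, γ, δ : ℝ → ℝ and define the log-density ℓf(x, θ) = α(θ)·γ(x) − β(θ) + δ(x). For data x₁, …, x_T and parameters θ0, θ1, define the two-segment log-likelihood ℓ(θ0, θ1, τ) = Σ_{t=1}^{τ} ℓf(x_t, θ0) + Σ_{t=τ+1}^{T} ℓf(x_t, θ1). Then for any 0 ≤ τ_i < τ_j ≤ T, ℓ(θ0, θ1, τ_i) − ℓ(θ0, θ1, τ_j) = [α(θ1) − α(θ0)] · Σ_{t=τ_i+1}^{τ_j} γ(x_t) − [β(θ1) − β(θ0)] · (τ_j − τ_i). -/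
/-! Moving the change point from `τi` to `τj` only swaps the parameter of the observations in
`(τi, τj]` from `θ1` to `θ0`; on each of them the `δ`-terms cancel, leaving
`(α θ1 - α θ0) γ(x_t) - (β θ1 - β θ0)`. -/

open Finset

theorem sum_Ioc_add_sum_Ioc_sub_sum_Ioc_add_sum_Ioc {M : Type*} [AddCommGroup M] (f g : ℕ → M)
    {a b c d : ℕ} (hab : a ≤ b) (hbc : b ≤ c) (hcd : c ≤ d) :
    (∑ t ∈ Ioc a b, f t + ∑ t ∈ Ioc b d, g t) - (∑ t ∈ Ioc a c, f t + ∑ t ∈ Ioc c d, g t) =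
      ∑ t ∈ Ioc b c, (g t - f t) := by
  rw [← sum_Ioc_consecutive f hab hbc, ← sum_Ioc_consecutive g hbc hcd, sum_sub_distrib]
  abel

theorem sum_Ioc_mul_sub_const {R : Type*} [CommRing R] (u : ℕ → R) (p q : R) {b c : ℕ}
    (hbc : b ≤ c) :
    ∑ t ∈ Ioc b c, (p * u t - q) = p * ∑ t ∈ Ioc b c, u t - q * ((c : R) - b) := by
  rw [sum_sub_distrib, ← mul_sum, sum_const, Nat.card_Ioc, nsmul_eq_mul, Nat.cast_sub hbc,
    mul_comm q]

theorem expFam_loglik_difference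
    (α β γ δ : ℝ → ℝ) (T : ℕ) (x : ℕ → ℝ) (θ0 θ1 : ℝ)
    (τi τj : ℕ) (hij : τi < τj) (hjT : τj ≤ T) :
    (((∑ t ∈ Finset.Icc 1 τi, (α θ0 * γ (x t) - β θ0 + δ (x t))) +
        ∑ t ∈ Finset.Ioc τi T, (α θ1 * γ (x t) - β θ1 + δ (x t))) -
      ((∑ t ∈ Finset.Icc 1 τj, (α θ0 * γ (x t) - β θ0 + δ (x t))) +
        ∑ t ∈ Finset.Ioc τj T, (α θ1 * γ (x t) - β θ1 + δ (x t))))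
    = (α θ1 - α θ0) * (∑ t ∈ Finset.Ioc τi τj, γ (x t))
      - (β θ1 - β θ0) * ((τj : ℝ) - τi) := by
  rw [← zero_add 1, Icc_add_one_left_eq_Ioc, Icc_add_one_left_eq_Ioc,
    sum_Ioc_add_sum_Ioc_sub_sum_Ioc_add_sum_Ioc _ _ τi.zero_le hij.le hjT,
    ← sum_Ioc_mul_sub_const _ _ _ hij.le]
  exact sum_congr rfl fun t _ => by ring
end

section
/- Let x₁, …, x_T ∈ ℝ and for 0 ≤ τ < T define the quadratic C_τ^{(T)}(θ) = Σ_{t=τ+1}^{T} θ·(x_t − θ/2). Let 𝓘 ⊆ {0, …, T−2} be a set of indices such that for all θ, max_{τ ∈ 𝓘} C_τ^{(T−1)}(θ) = max_{τ ∈ {0,…,T−2}} C_τ^{(T−1)}(θ). Then for all θ, max_{τ ∈ 𝓘 ∪ {T−1}} C_τ^{(T)}(θ) = max_{τ ∈ {0,…,T−1}} C_τ^{(T)}(θ). In particular, any set of candidate change locations whose curves realize the pointwise maximum Q_{T−1} continues, after adjoining the single location T−1, to realize the pointwise maximum Q_T. -/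
/-!
For `τ < T` the curve `C_τ^{(T)}` is `C_τ^{(T-1)}` plus the single term `θ (x_T - θ/2)`, which does
not depend on `τ`. Adding a common constant does not change which curves attain the pointwise
maximum, so `𝓘` still realizes the maximum over `{0, …, T-2}` at time `T`; the only new candidate
is `τ = T - 1`, and it is adjoined on both sides.
-/

open Finset

namespace Finset

variable {ι G : Type*} [AddGroup G] [LinearOrder G] [AddRightMono G]

theorem sup'_eq_sup'_of_eq_add_const {s t : Finset ι} (hs : s.Nonempty) (ht : t.Nonempty)
    {f g : ι → G} (c : G) (hgs : ∀ i ∈ s, g i = f i + c) (hgt : ∀ i ∈ t, g i = f i + c)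
    (hf : s.sup' hs f = t.sup' ht f) : s.sup' hs g = t.sup' ht g := by
  rw [sup'_congr hs rfl hgs, sup'_congr ht rfl hgt, ← sup'_add, ← sup'_add, hf]

theorem sum_Ioc_eq_sum_Ioc_pred_add {M : Type*} [AddCommMonoid M] {a b : ℕ} (hab : a < b)
    (f : ℕ → M) : ∑ k ∈ Ioc a b, f k = ∑ k ∈ Ioc a (b - 1), f k + f b := by
  obtain ⟨n, rfl⟩ := Nat.exists_eq_add_of_lt hab
  simpa using sum_Ioc_succ_top (Nat.le_add_right a n) f

theorem range_eq_insert_pred {n : ℕ} (hn : n ≠ 0) : range n = insert (n - 1) (range (n - 1)) := by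
  obtain ⟨m, rfl⟩ := Nat.exists_eq_succ_of_ne_zero hn
  exact range_add_one

end Finset

theorem focus_contributing_set_recursion
    (T : ℕ) (hT : 2 ≤ T) (x : ℕ → ℝ)
    (I : Finset ℕ) (hIne : I.Nonempty) (hIsub : I ⊆ Finset.range (T - 1))
    (hmax : ∀ θ : ℝ,
      I.sup' hIne (fun τ => ∑ t ∈ Finset.Ioc τ (T - 1), θ * (x t - θ / 2))
        = (Finset.range (T - 1)).sup' (Finset.nonempty_range_iff.mpr (by omega))
            (fun τ => ∑ t ∈ Finset.Ioc τ (T - 1), θ * (x t - θ / 2))) :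
    ∀ θ : ℝ,
      (insert (T - 1) I).sup' (Finset.insert_nonempty _ _)
          (fun τ => ∑ t ∈ Finset.Ioc τ T, θ * (x t - θ / 2))
        = (Finset.range T).sup' (Finset.nonempty_range_iff.mpr (by omega))
            (fun τ => ∑ t ∈ Finset.Ioc τ T, θ * (x t - θ / 2)) := by
  intro θ
  have hshift : ∀ τ ∈ range (T - 1), ∑ t ∈ Ioc τ T, θ * (x t - θ / 2)
      = ∑ t ∈ Ioc τ (T - 1), θ * (x t - θ / 2) + θ * (x T - θ / 2) := fun τ hτ ↦
    sum_Ioc_eq_sum_Ioc_pred_add (by have := mem_range.mp hτ; omega) _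
  have hI_realizes := sup'_eq_sup'_of_eq_add_const hIne (nonempty_range_iff.mpr (by omega))
    (g := fun τ ↦ ∑ t ∈ Ioc τ T, θ * (x t - θ / 2)) (θ * (x T - θ / 2))
    (fun τ hτ ↦ hshift τ (hIsub hτ)) hshift (hmax θ)
  rw [sup'_congr _ (range_eq_insert_pred (by omega)) fun _ _ ↦ rfl, sup'_insert (H := hIne),
    sup'_insert (H := nonempty_range_iff.mpr (by omega)), hI_realizes]
end

section
/- Let x₁, …, x_T ∈ ℝ and for 0 ≤ a < b ≤ T define C_a^{(b)}(θ) = Σ_{t=a+1}^{b} θ·(x_t − θ/2). Fix candidate change locations τ_i < τ_{i+1} ≤ T−1, and let l_i ≥ 0 be the largest nonnegative root of the difference quadratic C_{τ_i}^{(τ_{i+1})}(θ) (so C_{τ_i}^{(τ_{i+1})}(θ) ≥ 0 on [0, l_i]). Suppose the largest root of the quadratic C_{τ_{i+1}}^{(T−1)}(θ) is at most l_i. Then for every θ ≥ 0, C_{τ_{i+1}}^{(T)}(θ) ≤ max{ C_{τ_i}^{(T)}(θ), C_{T−1}^{(T)}(θ) }; consequently removing the curve with index τ_{i+1} does not change the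 pointwise maximum over θ ≥ 0 of the curves indexed by {τ_i, τ_{i+1}, T−1}. -/
open Finset

/-!
Each curve `C_a^{(b)}(θ) = θ (S - n θ / 2)` is a concave quadratic vanishing at `0`, so it is
nonnegative between its roots and nonpositive beyond its largest root. Split
`C_{τᵢ₊₁}^{(T)}` at `τᵢ` or at `T - 1`: for `θ ≤ lᵢ` the piece `C_{τᵢ}^{(τᵢ₊₁)}(θ)` is
nonnegative, so `C_{τᵢ₊₁}^{(T)}(θ) ≤ C_{τᵢ}^{(T)}(θ)`; for `θ > lᵢ` we are past the largest root
of `C_{τᵢ₊₁}^{(T-1)}`, so `C_{τᵢ₊₁}^{(T)}(θ) ≤ C_{T-1}^{(T)}(θ)`.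
-/

/-- The paper's `C_a^{(b)}` is `llrCurve (Ioc a b) x`. -/
noncomputable def llrCurve {ι : Type*} (s : Finset ι) (x : ι → ℝ) (θ : ℝ) : ℝ :=
  ∑ t ∈ s, θ * (x t - θ / 2)

section llrCurve

variable {ι : Type*} (s : Finset ι) (x : ι → ℝ)

theorem llrCurve_eq (θ : ℝ) :
    llrCurve s x θ = θ * (∑ t ∈ s, x t) - #s * θ ^ 2 / 2 := by
  simp only [llrCurve, mul_sub, sum_sub_distrib, ← mul_sum, sum_const, nsmul_eq_mul]
  ring

theorem llrCurve_nonneg_of_le_root {l θ : ℝ} (hl : 0 ≤ l) (hroot : llrCurve s x l = 0)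
    (hθ : 0 ≤ θ) (hθl : θ ≤ l) : 0 ≤ llrCurve s x θ := by
  rw [llrCurve_eq] at hroot ⊢
  have key : l * (θ * (∑ t ∈ s, x t) - #s * θ ^ 2 / 2) = #s * θ * l * (l - θ) / 2 := by
    linear_combination θ * hroot
  rcases hl.eq_or_lt with rfl | hl
  · simp [le_antisymm hθl hθ]
  · refine nonneg_of_mul_nonneg_right (a := l) ?_ hl
    rw [key]
    have := sub_nonneg.mpr hθl
    positivity

theorem llrCurve_nonpos_of_largest_root_lt {r θ : ℝ}
    (hmax : ∀ θ, llrCurve s x θ = 0 → θ ≤ r) (hrθ : r < θ) : llrCurve s x θ ≤ 0 := by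
  rcases s.eq_empty_or_nonempty with rfl | hs
  · simp [llrCurve]
  have hn : (0 : ℝ) < #s := by exact_mod_cast hs.card_pos
  -- the nonzero root is twice the sample mean
  set ρ := 2 * (∑ t ∈ s, x t) / #s
  have factor : ∀ ϑ, llrCurve s x ϑ = #s / 2 * ϑ * (ρ - ϑ) := by
    intro ϑ
    rw [llrCurve_eq]
    simp only [ρ]
    field_simp
  have hρ : ρ ≤ r := hmax ρ (by rw [factor, sub_self, mul_zero])
  have h0 : 0 ≤ r := hmax 0 (by rw [factor, mul_zero, zero_mul])
  have hθ : 0 ≤ θ := by linarith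
  rw [factor]
  exact mul_nonpos_of_nonneg_of_nonpos (by positivity) (by linarith)

end llrCurve

theorem llrCurve_Ioc_add_llrCurve_Ioc (x : ℕ → ℝ) {a b c : ℕ} (hab : a ≤ b) (hbc : b ≤ c)
    (θ : ℝ) : llrCurve (Ioc a b) x θ + llrCurve (Ioc b c) x θ = llrCurve (Ioc a c) x θ :=
  sum_Ioc_consecutive _ hab hbc

theorem focus_pruning_correctness_general
    (T : ℕ) (x : ℕ → ℝ)
    (τi τi1 : ℕ) (hii : τi < τi1) (hi1T : τi1 ≤ T - 1)
    (li : ℝ) (hli0 : 0 ≤ li)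
    -- `li` is the largest nonnegative root of the difference quadratic `C_{τi}^{(τi1)}`
    (hliroot : (∑ t ∈ Finset.Ioc τi τi1, li * (x t - li / 2)) = 0)
    -- the largest root of `C_{τi1}^{(T-1)}` is at most `li`
    (hroot2 : ∃ r : ℝ, r ≤ li ∧ (∑ t ∈ Finset.Ioc τi1 (T - 1), r * (x t - r / 2)) = 0 ∧
      ∀ θ : ℝ, (∑ t ∈ Finset.Ioc τi1 (T - 1), θ * (x t - θ / 2)) = 0 → θ ≤ r) :
    ∀ θ : ℝ, 0 ≤ θ →
      (∑ t ∈ Finset.Ioc τi1 T, θ * (x t - θ / 2))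
        ≤ max (∑ t ∈ Finset.Ioc τi T, θ * (x t - θ / 2))
            (∑ t ∈ Finset.Ioc (T - 1) T, θ * (x t - θ / 2)) := by
  intro θ hθ
  obtain ⟨r, hrli, -, hrmax⟩ := hroot2
  show llrCurve (Ioc τi1 T) x θ
    ≤ max (llrCurve (Ioc τi T) x θ) (llrCurve (Ioc (T - 1) T) x θ)
  have splitAtτi1 := llrCurve_Ioc_add_llrCurve_Ioc x hii.le (hi1T.trans (T.sub_le 1)) θ
  have splitAtT1 := llrCurve_Ioc_add_llrCurve_Ioc x hi1T (T.sub_le 1) θ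
  rcases le_or_gt θ li with hθli | hliθ
  · have := llrCurve_nonneg_of_le_root _ x hli0 hliroot hθ hθli
    exact le_max_of_le_left (by linarith)
  · have := llrCurve_nonpos_of_largest_root_lt _ x hrmax (hrli.trans_lt hliθ)
    exact le_max_of_le_right (by linarith)

theorem focus_pruning_correctness
    (T : ℕ) (hT : 1 ≤ T) (x : ℕ → ℝ)
    (τi τi1 : ℕ) (hii : τi < τi1) (hi1T : τi1 ≤ T - 1)
    (li : ℝ) (hli0 : 0 ≤ li)
    -- `li` is the largest nonnegative root of the difference quadratic `C_{τi}^{(τi1)}`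
    (hliroot : (∑ t ∈ Finset.Ioc τi τi1, li * (x t - li / 2)) = 0)
    (hlilargest : ∀ θ : ℝ, 0 ≤ θ → (∑ t ∈ Finset.Ioc τi τi1, θ * (x t - θ / 2)) = 0 → θ ≤ li)
    -- the largest root of `C_{τi1}^{(T-1)}` is at most `li`
    (hroot2 : ∃ r : ℝ, r ≤ li ∧ (∑ t ∈ Finset.Ioc τi1 (T - 1), r * (x t - r / 2)) = 0 ∧
      ∀ θ : ℝ, (∑ t ∈ Finset.Ioc τi1 (T - 1), θ * (x t - θ / 2)) = 0 → θ ≤ r) :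
    ∀ θ : ℝ, 0 ≤ θ →
      (∑ t ∈ Finset.Ioc τi1 T, θ * (x t - θ / 2))
        ≤ max (∑ t ∈ Finset.Ioc τi T, θ * (x t - θ / 2))
            (∑ t ∈ Finset.Ioc (T - 1) T, θ * (x t - θ / 2)) :=
  focus_pruning_correctness_general T x τi τi1 hii hi1T li hli0 hliroot hroot2
end

section
/- Fix θ0 > 0 and k > 0. The function φ(θ) = k·(log θ − log θ0)/(1/θ0 − 1/θ), defined for θ > 0 with θ ≠ θ0, is strictly monotone increasing on (0, ∞) \ {θ0}. -/
open Set

lemma neg_k_log_strictConvex {k : ℝ} (hk : 0 < k) :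
    StrictConvexOn ℝ (Iio (0:ℝ)) (fun a => -k * Real.log a) := by
  have h := strictConcaveOn_log_Iio
  refine ⟨h.1, fun x hx y hy hxy a b ha hb hab => ?_⟩
  have key := h.2 hx hy hxy ha hb hab
  simp only [smul_eq_mul] at key ⊢
  nlinarith [key, hk]

theorem gamma_ratio_strictMono (θ0 k : ℝ) (hθ0 : 0 < θ0) (hk : 0 < k) :
    StrictMonoOn (fun θ : ℝ => k * (Real.log θ - Real.log θ0) / (1 / θ0 - 1 / θ))
      {θ : ℝ | 0 < θ ∧ θ ≠ θ0} := by
  intro x hx y hy hxy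
  obtain ⟨hx0, hxne⟩ := hx
  obtain ⟨hy0, hyne⟩ := hy
  have hconv := neg_k_log_strictConvex hk
  have hmemx : (-(1/x) : ℝ) ∈ Iio (0:ℝ) := by simp [hx0]
  have hmemy : (-(1/y) : ℝ) ∈ Iio (0:ℝ) := by simp [hy0]
  have hmema : (-(1/θ0) : ℝ) ∈ Iio (0:ℝ) := by simp [hθ0]
  have hxa : (-(1/x) : ℝ) ≠ -(1/θ0) := by
    intro h
    apply hxne
    have : (1:ℝ)/x = 1/θ0 := by linarith [neg_injective h]
    field_simp at this; linarith
  have hya : (-(1/y) : ℝ) ≠ -(1/θ0) := by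
    intro h
    apply hyne
    have : (1:ℝ)/y = 1/θ0 := by linarith [neg_injective h]
    field_simp at this; linarith
  have hxy' : (-(1/x) : ℝ) < -(1/y) := by
    have : (1:ℝ)/y < 1/x := one_div_lt_one_div_of_lt hx0 hxy
    linarith
  have key := hconv.secant_strict_mono hmema hmemx hmemy hxa hya hxy'
  have hlogx : Real.log (-(1/x)) = -Real.log x := by
    rw [Real.log_neg_eq_log, Real.log_div, Real.log_one] <;> simp [ne_of_gt hx0]
  have hlogy : Real.log (-(1/y)) = -Real.log y := by
    rw [Real.log_neg_eq_log, Real.log_div, Real.log_one] <;> simp [ne_of_gt hy0]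
  have hloga : Real.log (-(1/θ0)) = -Real.log θ0 := by
    rw [Real.log_neg_eq_log, Real.log_div, Real.log_one] <;> simp [ne_of_gt hθ0]
  simp only [hlogx, hlogy, hloga] at key
  have e1 : -k * -Real.log x - -k * -Real.log θ0 = k * (Real.log x - Real.log θ0) := by ring
  have e2 : -k * -Real.log y - -k * -Real.log θ0 = k * (Real.log y - Real.log θ0) := by ring
  have e3 : (-(1/x) : ℝ) - -(1/θ0) = 1/θ0 - 1/x := by ring
  have e4 : (-(1/y) : ℝ) - -(1/θ0) = 1/θ0 - 1/y := by ring
  simpa only [e1, e2, e3, e4] using key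
end

section
/- Fix θ0 ∈ (0, 1) and a positive integer n. The function φ(θ) = [−n·log(1−θ) + n·log(1−θ0)] / [ (log θ − log(1−θ)) − (log θ0 − log(1−θ0)) ], defined for θ ∈ (0, 1) with θ ≠ θ0, is strictly monotone increasing on (0, 1) \ {θ0}. -/
/-!
In the natural parameter `η = log θ - log (1 - θ)` the cumulant function of the Binomial model
is `n * log (1 + exp η) = -n * log (1 - θ)`, which is strictly convex because its derivative is
`n * sigmoid η`. The ratio is therefore the slope of the secant of a strictly convex function
between `η₀` and `η`; such slopes increase strictly with `η`, and `θ ↦ η` is strictly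
increasing.
-/

open Real Set

theorem StrictConvexOn.strictMonoOn_secant_comp {D s : Set ℝ} {f g : ℝ → ℝ}
    (hf : StrictConvexOn ℝ D f) (hg : StrictMonoOn g s) (hgs : MapsTo g s D) {a : ℝ}
    (ha : a ∈ s) :
    StrictMonoOn (fun x => (f (g x) - f (g a)) / (g x - g a)) (s \ {a}) := by
  rintro x ⟨hx, hxa⟩ y ⟨hy, hya⟩ hxy
  have hgxa : g x ≠ g a := fun h => hxa (hg.injOn hx ha h)
  have hgya : g y ≠ g a := fun h => hya (hg.injOn hy ha h)
  exact hf.secant_strict_mono (hgs ha) (hgs hx) (hgs hy) hgxa hgya (hg hx hy hxy)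

theorem hasDerivAt_log_one_add_exp (x : ℝ) :
    HasDerivAt (fun x => log (1 + exp x)) (sigmoid x) x := by
  have hpos : 0 < 1 + exp x := by positivity
  convert ((hasDerivAt_exp x).const_add 1).log hpos.ne' using 1
  rw [sigmoid_def, exp_neg]
  field_simp
  ring

theorem strictConvexOn_const_mul_log_one_add_exp {c : ℝ} (hc : 0 < c) :
    StrictConvexOn ℝ univ (fun x => c * log (1 + exp x)) := by
  have hderiv : deriv (fun x => c * log (1 + exp x)) = fun x => c * sigmoid x :=
    funext fun x => ((hasDerivAt_log_one_add_exp x).const_mul c).deriv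
  refine StrictMono.strictConvexOn_univ_of_deriv ?_ ?_
  · exact continuous_const.mul
      ((continuous_const.add continuous_exp).log fun x => (add_pos one_pos (exp_pos x)).ne')
  · rw [hderiv]
    exact sigmoid_strictMono.const_mul hc

theorem strictMonoOn_log_sub_log_one_sub :
    StrictMonoOn (fun θ => log θ - log (1 - θ)) (Ioo 0 1) := by
  rintro a ⟨ha0, -⟩ b ⟨-, hb1⟩ hab
  have hlog : log a < log b := log_lt_log ha0 hab
  have hlog_one_sub : log (1 - b) < log (1 - a) := log_lt_log (by linarith) (by linarith)
  dsimp only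
  linarith

theorem log_one_add_exp_log_sub_log_one_sub {θ : ℝ} (hθ : θ ∈ Ioo 0 1) :
    log (1 + exp (log θ - log (1 - θ))) = -log (1 - θ) := by
  obtain ⟨hθ0, hθ1⟩ := hθ
  have hθ1' : 0 < 1 - θ := by linarith
  have hsum : 1 + exp (log θ - log (1 - θ)) = (1 - θ)⁻¹ := by
    rw [exp_sub, exp_log hθ0, exp_log hθ1']
    field_simp
    ring
  rw [hsum, log_inv]

theorem binomial_ratio_strictMono (θ0 : ℝ) (hθ0 : θ0 ∈ Set.Ioo (0 : ℝ) 1)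
    (n : ℕ) (hn : 0 < n) :
    StrictMonoOn
      (fun θ : ℝ => (-(n : ℝ) * Real.log (1 - θ) + (n : ℝ) * Real.log (1 - θ0))
        / ((Real.log θ - Real.log (1 - θ)) - (Real.log θ0 - Real.log (1 - θ0))))
      {θ : ℝ | 0 < θ ∧ θ < 1 ∧ θ ≠ θ0} := by
  have hsecant := (strictConvexOn_const_mul_log_one_add_exp (Nat.cast_pos.mpr hn))
    |>.strictMonoOn_secant_comp strictMonoOn_log_sub_log_one_sub (mapsTo_univ _ _) hθ0
  have hsubset : {θ : ℝ | 0 < θ ∧ θ < 1 ∧ θ ≠ θ0} ⊆ Ioo 0 1 \ {θ0} :=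
    fun θ ⟨h0, h1, hne⟩ => ⟨⟨h0, h1⟩, hne⟩
  refine (hsecant.mono hsubset).congr fun θ hθ => ?_
  simp only [log_one_add_exp_log_sub_log_one_sub hθ0,
    log_one_add_exp_log_sub_log_one_sub (hsubset hθ).1]
  ring
end

section
/- Fix θ0 > 0. The function φ(θ) = (log θ − log θ0)/(1/θ0² − 1/θ²), defined for θ > 0 with θ ≠ θ0, is strictly monotone increasing on (0, ∞) \ {θ0}. -/
theorem gaussian_variance_ratio_strictMono (θ0 : ℝ) (hθ0 : 0 < θ0) :
    StrictMonoOn (fun θ : ℝ => (Real.log θ - Real.log θ0) / (1 / θ0 ^ 2 - 1 / θ ^ 2))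
      {θ : ℝ | 0 < θ ∧ θ ≠ θ0} := by
  rintro x ⟨hx, hxne⟩ y ⟨hy, hyne⟩ hxy
  set a : ℝ := 1 / θ0 ^ 2 with ha_def
  have ha : a ∈ Set.Ioi (0:ℝ) := by simp only [Set.mem_Ioi]; positivity
  have hu : (1 : ℝ) / x ^ 2 ∈ Set.Ioi (0:ℝ) := by simp only [Set.mem_Ioi]; positivity
  have hv : (1 : ℝ) / y ^ 2 ∈ Set.Ioi (0:ℝ) := by simp only [Set.mem_Ioi]; positivity
  have huv : (1 : ℝ) / y ^ 2 < 1 / x ^ 2 := by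
    apply one_div_lt_one_div_of_lt (by positivity)
    nlinarith
  have hune : (1 : ℝ) / x ^ 2 ≠ a := by
    intro h
    rw [ha_def] at h
    field_simp at h
    first
    | exact hxne h.symm
    | exact hxne h
    | (apply hxne; nlinarith)
  have hvne : (1 : ℝ) / y ^ 2 ≠ a := by
    intro h
    rw [ha_def] at h
    field_simp at h
    first
    | exact hyne h.symm
    | exact hyne h
    | (apply hyne; nlinarith)
  have key := strictConcaveOn_log_Ioi.secant_strict_mono ha hv hu hvne hune huv
  have hlogx : Real.log (1 / x ^ 2) = -(2 * Real.log x) := by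
    rw [one_div, Real.log_inv, Real.log_pow]; push_cast; ring
  have hlogy : Real.log (1 / y ^ 2) = -(2 * Real.log y) := by
    rw [one_div, Real.log_inv, Real.log_pow]; push_cast; ring
  have hloga : Real.log a = -(2 * Real.log θ0) := by
    rw [ha_def, one_div, Real.log_inv, Real.log_pow]; push_cast; ring
  rw [hlogx, hlogy, hloga] at key
  have hxa : (1 : ℝ) / x ^ 2 - a ≠ 0 := sub_ne_zero.mpr hune
  have hxa' : a - (1 : ℝ) / x ^ 2 ≠ 0 := sub_ne_zero.mpr (Ne.symm hune)
  have hya : (1 : ℝ) / y ^ 2 - a ≠ 0 := sub_ne_zero.mpr hvne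
  have hya' : a - (1 : ℝ) / y ^ 2 ≠ 0 := sub_ne_zero.mpr (Ne.symm hvne)
  have ex : (Real.log x - Real.log θ0) / (a - 1 / x ^ 2)
      = (1/2) * ((-(2 * Real.log x) - -(2 * Real.log θ0)) / (1 / x ^ 2 - a)) := by
    rw [← neg_div_neg_eq, neg_sub, neg_sub]; ring
  have ey : (Real.log y - Real.log θ0) / (a - 1 / y ^ 2)
      = (1/2) * ((-(2 * Real.log y) - -(2 * Real.log θ0)) / (1 / y ^ 2 - a)) := by
    rw [← neg_div_neg_eq, neg_sub, neg_sub]; ring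
  simp only [Set.mem_setOf_eq]
  show (Real.log x - Real.log θ0) / (1 / θ0 ^ 2 - 1 / x ^ 2)
      < (Real.log y - Real.log θ0) / (1 / θ0 ^ 2 - 1 / y ^ 2)
  rw [← ha_def]
  rw [ex, ey]
  linarith
end
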